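/- Loss of convexity of the stored energy due to the non-Hookean γ-term: let d ≥ 1 and let λ, G, γ be real constants with γ > (√d/2)·λ + G/√d. Then the function W : ℝ^{d×d} → ℝ, W(e) = (λ/2)·(tr e)² + G·‖e‖_F² − γ·(tr e)·‖e‖_F, is not convex; indeed W(t·𝕀) = t²·((λ/2)·d² + G·d − γ·d^{3/2}) for all t ≥ 0, with negative coefficient, so convexity fails along the ray of isotropic dilations. -/

import Mathlib

/-!
Both the trace and the Frobenius norm are positively 1-homogeneous, so `W (t • e) = t² W e` for
`t ≥ 0`. On the identity, `tr 𝕀 = d` and `‖𝕀‖_F = √d`, so `W 𝕀 = d√d (√d λ/2 + G/√d − γ) < 0`.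
A convex function vanishing at `0` satisfies `2 W 𝕀 ≤ W (2 • 𝕀) = 4 W 𝕀`, forcing `W 𝕀 ≥ 0`.
-/

open Matrix Real

noncomputable section

/-- The Frobenius norm `‖A‖_F = √(tr(Aᵀ·A))`. -/
def normF {d : ℕ} (A : Matrix (Fin d) (Fin d) ℝ) : ℝ :=
  Real.sqrt (Matrix.trace (Aᵀ * A))

/-- The small-strain mechanical stored energy (2.1) without the Biot term. -/
def Wsmall {d : ℕ} (lam G gam : ℝ) (e : Matrix (Fin d) (Fin d) ℝ) : ℝ :=
  lam / 2 * (Matrix.trace e)^2 + G * Matrix.trace (eᵀ * e)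
    - gam * Matrix.trace e * normF e

theorem Real.rpow_three_halves {x : ℝ} (hx : 0 ≤ x) : x ^ ((3 : ℝ) / 2) = x * √x := by
  rw [show (3 : ℝ) / 2 = 1 + 1 / 2 by norm_num, rpow_one_add' hx (by norm_num), sqrt_eq_rpow]

theorem ConvexOn.two_mul_le_apply_two_smul {E : Type*} [AddCommGroup E] [Module ℝ E]
    {s : Set E} {f : E → ℝ} (hf : ConvexOn ℝ s f) (h0 : 0 ∈ s) {v : E} (hv : (2 : ℝ) • v ∈ s)
    (hf0 : f 0 = 0) : 2 * f v ≤ f ((2 : ℝ) • v) := by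
  have h := hf.2 h0 hv (by norm_num : (0 : ℝ) ≤ 1 / 2) (by norm_num : (0 : ℝ) ≤ 1 / 2)
    (by norm_num)
  rw [smul_zero, zero_add, smul_smul, hf0, smul_eq_mul, smul_eq_mul] at h
  norm_num at h
  linarith

section

variable {d : ℕ}

theorem trace_transpose_smul_mul_smul (t : ℝ) (A : Matrix (Fin d) (Fin d) ℝ) :
    trace ((t • A)ᵀ * (t • A)) = t ^ 2 * trace (Aᵀ * A) := by
  rw [transpose_smul, smul_mul_smul_comm, trace_smul, smul_eq_mul, sq]

theorem normF_smul (t : ℝ) (A : Matrix (Fin d) (Fin d) ℝ) :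
    normF (t • A) = |t| * normF A := by
  rw [normF, normF, trace_transpose_smul_mul_smul, sqrt_mul (sq_nonneg t), sqrt_sq_eq_abs]

theorem normF_one : normF (1 : Matrix (Fin d) (Fin d) ℝ) = √d := by
  simp [normF]

variable (lam G gam : ℝ)

@[simp]
theorem Wsmall_zero : Wsmall lam G gam (0 : Matrix (Fin d) (Fin d) ℝ) = 0 := by
  simp [Wsmall]

theorem Wsmall_smul {t : ℝ} (ht : 0 ≤ t) (e : Matrix (Fin d) (Fin d) ℝ) :
    Wsmall lam G gam (t • e) = t ^ 2 * Wsmall lam G gam e := by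
  rw [Wsmall, Wsmall, trace_transpose_smul_mul_smul, normF_smul, trace_smul, smul_eq_mul,
    abs_of_nonneg ht]
  ring

theorem Wsmall_one : Wsmall lam G gam (1 : Matrix (Fin d) (Fin d) ℝ)
    = lam / 2 * (d : ℝ) ^ 2 + G * d - gam * (d : ℝ) ^ ((3 : ℝ) / 2) := by
  rw [Wsmall, normF_one, transpose_one, one_mul, trace_one, Fintype.card_fin,
    rpow_three_halves d.cast_nonneg]
  ring

end

theorem isotropic_coeff_neg {x lam G gam : ℝ} (hx : 0 < x) (h : √x / 2 * lam + G / √x < gam) :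
    lam / 2 * x ^ 2 + G * x - gam * x ^ ((3 : ℝ) / 2) < 0 := by
  calc lam / 2 * x ^ 2 + G * x - gam * x ^ ((3 : ℝ) / 2)
      = x * √x * (√x / 2 * lam + G / √x - gam) := by
        rw [rpow_three_halves hx.le]
        field_simp
        rw [sq_sqrt hx.le]
    _ < 0 := mul_neg_of_pos_of_neg (by positivity) (by linarith)

/-- Loss of convexity of the stored energy due to the non-Hookean γ-term: if
`γ > (√d/2)·λ + G/√d` then `W` is not convex; indeed
`W(t·𝕀) = t²·((λ/2)·d² + G·d − γ·d^{3/2})` for all `t ≥ 0`, with negative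
coefficient, so convexity fails along the ray of isotropic dilations. -/
theorem stored_energy_not_convex
    (d : ℕ) (hd : 1 ≤ d) (lam G gam : ℝ)
    (hgam : Real.sqrt d / 2 * lam + G / Real.sqrt d < gam) :
    ¬ ConvexOn ℝ Set.univ (Wsmall (d := d) lam G gam)
    ∧ (∀ t : ℝ, 0 ≤ t →
        Wsmall lam G gam (t • (1 : Matrix (Fin d) (Fin d) ℝ))
          = t^2 * (lam / 2 * (d : ℝ)^2 + G * d - gam * (d : ℝ) ^ ((3:ℝ)/2)))
    ∧ lam / 2 * (d : ℝ)^2 + G * d - gam * (d : ℝ) ^ ((3:ℝ)/2) < 0 := by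
  have hcoeff := isotropic_coeff_neg (by exact_mod_cast hd) hgam
  refine ⟨fun hconv => ?_, fun t ht => by rw [Wsmall_smul lam G gam ht, Wsmall_one], hcoeff⟩
  have h := hconv.two_mul_le_apply_two_smul (Set.mem_univ _) (Set.mem_univ _)
    (Wsmall_zero lam G gam) (v := 1)
  rw [Wsmall_smul lam G gam zero_le_two, Wsmall_one] at h
  linarith
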